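/- arXiv:1707.02917 — 2 statements merged into one kernel-verified Lean document; each statement's English description precedes it below -/
import Mathlib

section
/- Wave equation for the first auxiliary function Φ₁: let N₁ ∈ ℕ and let u : (0,T) × (0,∞) → ℝ be a C² function satisfying, for all (t,r), (1 + 2 sin²u/r²)(∂ₜₜu − ∂ᵣᵣu) − (2/r)∂ᵣu + (sin 2u / r²)(1 + (∂ₜu)² − (∂ᵣu)² + sin²u/r²) = 0. Define Φ₁(t,r) = ∫_{N₁π}^{u(t,r)} A(r,w)^{1/2} dw. Then for all (t,r) ∈ (0,T) × (0,∞), ∂ₜₜΦ₁ − ∂ᵣᵣΦ₁ − (2/r)∂ᵣΦ₁ = −(2/r²)Φ₁ + (1/2) ∫_{N₁π}^{u(t,r)} [ 3(A(r,w)^{3/2} − A(r,w)^{1/2}) + A(r,w)^{-1/2} − A(r,w)^{-3/2} ] dw. -/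
open Real Set

/-- Time partial derivative. -/
noncomputable def pdt (f : ℝ → ℝ → ℝ) : ℝ → ℝ → ℝ :=
  fun t r => deriv (fun s => f s r) t

/-- Radial partial derivative. -/
noncomputable def pdr (f : ℝ → ℝ → ℝ) : ℝ → ℝ → ℝ :=
  fun t r => deriv (fun s => f t s) r

/-- `A(r,w) = 1 + 2 sin² w / r²`. -/
noncomputable def Afun (r w : ℝ) : ℝ := 1 + 2 * Real.sin w ^ 2 / r ^ 2

/-!
In the variable `κ = 1/r` the weight `A = 1 + 2 κ² sin² w` is smooth on all of `ℝ²`, and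
`Φ₁(t, r) = F(1/r, u(t, r))` with `F(κ, x) = ∫_{N₁π}^x √A(κ, w) dw`, so differentiation under the
integral sign gives every derivative of `Φ₁`. Since `∂_rr + (2/r) ∂_r` maps `G(1/r)` to
`r⁻⁴ G''(1/r)`, the chain rule leaves
`√A (u_tt - u_rr) + ∂_w√A (u_t² - u_r²) + (terms in u_r) - κ⁴ ∫ ∂_κκ√A`.
Dividing the equation by `√A` cancels everything that involves derivatives of `u`; what remains
is `½ ∫ (…) = 2κ² ∫ √A - κ⁴ ∫ ∂_κκ√A - ψ(κ, u)`, where `ψ √A` is the zeroth-order term of the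
equation. This holds because `∂_w ψ` is the integrand and `ψ` vanishes at `w = N₁π`.
-/

open Filter Topology Function MeasureTheory

theorem ContDiffAt.eventually_differentiableAt {𝕜 E F : Type*} [NontriviallyNormedField 𝕜]
    [NormedAddCommGroup E] [NormedSpace 𝕜 E] [NormedAddCommGroup F] [NormedSpace 𝕜 F]
    {f : E → F} {x : E} {n : ℕ} (hf : ContDiffAt 𝕜 n f x) (hn : n ≠ 0) :
    ∀ᶠ y in 𝓝 x, DifferentiableAt 𝕜 f y :=
  (hf.eventually (by simp)).mono fun _ hy => hy.differentiableAt (by exact_mod_cast hn)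

section PartialDerivatives

variable {u : ℝ → ℝ → ℝ} {t r : ℝ}

theorem hasDerivAt_pdr (hu : DifferentiableAt ℝ (uncurry u) (t, r)) :
    HasDerivAt (u t) (pdr u t r) r :=
  (hu.comp r ((differentiableAt_const t).prodMk differentiableAt_id)).hasDerivAt

theorem hasDerivAt_pdt (hu : DifferentiableAt ℝ (uncurry u) (t, r)) :
    HasDerivAt (u · r) (pdt u t r) t :=
  hasDerivAt_pdr (u := flip u) (hu.comp (f := fun p : ℝ × ℝ => (p.2, p.1)) (r, t)
    (differentiableAt_snd.prodMk differentiableAt_fst))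

theorem hasDerivAt_pdr_pdr (hu : ContDiffAt ℝ 2 (uncurry u) (t, r)) :
    HasDerivAt (pdr u t) (pdr (pdr u) t r) r := by
  have h : ContDiffAt ℝ 2 (u t) r := hu.comp r (contDiffAt_const.prodMk contDiffAt_id)
  exact (((h.fderiv_right (m := 1) le_rfl).clm_apply contDiffAt_const).differentiableAt
    one_ne_zero).hasDerivAt

theorem hasDerivAt_pdt_pdt (hu : ContDiffAt ℝ 2 (uncurry u) (t, r)) :
    HasDerivAt (pdt u · r) (pdt (pdt u) t r) t :=
  hasDerivAt_pdr_pdr (u := flip u) (hu.comp (r, t) (contDiffAt_snd.prodMk contDiffAt_fst))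

end PartialDerivatives

section ParametricPrimitive

variable {g g' : ℝ → ℝ → ℝ}

theorem hasDerivAt_intervalIntegral_param (hg : Continuous (uncurry g))
    (hg' : Continuous (uncurry g')) (hderiv : ∀ κ w, HasDerivAt (g · w) (g' κ w) κ)
    (a x κ : ℝ) :
    HasDerivAt (fun κ => ∫ w in a..x, g κ w) (∫ w in a..x, g' κ w) κ := by
  obtain ⟨C, hC⟩ := ((isCompact_closedBall κ 1).prod (isCompact_uIcc (a := a) (b := x))
    ).exists_bound_of_continuousOn hg'.continuousOn
  refine (intervalIntegral.hasDerivAt_integral_of_dominated_loc_of_deriv_le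
    (Metric.ball_mem_nhds κ one_pos) (bound := fun _ => C)
    (Eventually.of_forall fun ρ => (hg.uncurry_left ρ).aestronglyMeasurable)
    ((hg.uncurry_left κ).intervalIntegrable a x) (hg'.uncurry_left κ).aestronglyMeasurable
    ?_ intervalIntegrable_const (ae_of_all _ fun w _ ρ _ => hderiv ρ w)).2
  exact ae_of_all _ fun w hw ρ hρ =>
    hC (ρ, w) ⟨Metric.ball_subset_closedBall hρ, uIoc_subset_uIcc hw⟩

theorem hasStrictFDerivAt_intervalIntegral_param (hg : Continuous (uncurry g))
    (hg' : Continuous (uncurry g')) (hderiv : ∀ κ w, HasDerivAt (g · w) (g' κ w) κ)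
    (a : ℝ) (p : ℝ × ℝ) :
    HasStrictFDerivAt (fun p : ℝ × ℝ => ∫ w in a..p.2, g p.1 w)
      ((ContinuousLinearMap.smulRight (1 : ℝ →L[ℝ] ℝ) (∫ w in a..p.2, g' p.1 w)).coprod
        (ContinuousLinearMap.smulRight (1 : ℝ →L[ℝ] ℝ) (g p.1 p.2))) p := by
  refine hasStrictFDerivAt_uncurry_coprod (f := fun κ x => ∫ w in a..x, g κ w)
    (f₁ := fun κ x => ContinuousLinearMap.smulRight (1 : ℝ →L[ℝ] ℝ) (∫ w in a..x, g' κ w))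
    (f₂ := fun κ x => ContinuousLinearMap.smulRight (1 : ℝ →L[ℝ] ℝ) (g κ x))
    (Eventually.of_forall fun q => ?_) (Eventually.of_forall fun q => ?_) ?_ ?_
  · exact (hasDerivAt_intervalIntegral_param hg hg' hderiv a q.2 q.1).hasFDerivAt
  · exact ((hg.uncurry_left q.1).integral_hasStrictDerivAt a q.2).hasDerivAt.hasFDerivAt
  · exact ((ContinuousLinearMap.smulRightL ℝ ℝ ℝ 1).continuous.comp
      (intervalIntegral.continuous_parametric_primitive_of_continuous hg')).continuousAt
  · exact ((ContinuousLinearMap.smulRightL ℝ ℝ ℝ 1).continuous.comp hg).continuousAt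

theorem HasDerivAt.intervalIntegral_param (hg : Continuous (uncurry g))
    (hg' : Continuous (uncurry g')) (hderiv : ∀ κ w, HasDerivAt (g · w) (g' κ w) κ) (a : ℝ)
    {k v : ℝ → ℝ} {k' v' r : ℝ} (hk : HasDerivAt k k' r) (hv : HasDerivAt v v' r) :
    HasDerivAt (fun ρ => ∫ w in a..v ρ, g (k ρ) w)
      ((∫ w in a..v r, g' (k r) w) * k' + g (k r) (v r) * v') r := by
  refine ((hasStrictFDerivAt_intervalIntegral_param hg hg' hderiv a (k r, v r)).hasFDerivAt
    |>.comp_hasDerivAt r (hk.prodMk hv)).congr_deriv ?_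
  simp [mul_comm]

end ParametricPrimitive

namespace Skyrme

noncomputable section

def A (κ w : ℝ) : ℝ := 1 + 2 * (κ * sin w) ^ 2

-- also at `r = 0`, where both sides are `1` because `x / 0 = 0` and `0⁻¹ = 0`
theorem Afun_eq_A (r w : ℝ) : Afun r w = A r⁻¹ w := by
  simp only [Afun, A]; ring

theorem A_pos (κ w : ℝ) : 0 < A κ w := by
  unfold A; positivity

theorem continuous_A : Continuous (uncurry A) := by
  unfold uncurry A; fun_prop

def sqrtA (κ w : ℝ) : ℝ := √(A κ w)

def sqrtA₁ (κ w : ℝ) : ℝ := 2 * κ * sin w ^ 2 / sqrtA κ w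

def sqrtA₂ (κ w : ℝ) : ℝ := 2 * sin w ^ 2 / (A κ w * sqrtA κ w)

theorem sqrtA_pos (κ w : ℝ) : 0 < sqrtA κ w := sqrt_pos.2 (A_pos κ w)

theorem sq_sqrtA (κ w : ℝ) : sqrtA κ w ^ 2 = A κ w := sq_sqrt (A_pos κ w).le

theorem continuous_sqrtA : Continuous (uncurry sqrtA) :=
  continuous_sqrt.comp continuous_A

theorem continuous_sqrtA₁ : Continuous (uncurry sqrtA₁) :=
  Continuous.div (by fun_prop) continuous_sqrtA fun p => (sqrtA_pos p.1 p.2).ne'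

theorem continuous_sqrtA₂ : Continuous (uncurry sqrtA₂) :=
  Continuous.div (by fun_prop) (continuous_A.mul continuous_sqrtA)
    fun p => (mul_pos (A_pos p.1 p.2) (sqrtA_pos p.1 p.2)).ne'

theorem hasDerivAt_sqrtA_comp {k v : ℝ → ℝ} {k' v' r : ℝ} (hk : HasDerivAt k k' r)
    (hv : HasDerivAt v v' r) :
    HasDerivAt (fun ρ => sqrtA (k ρ) (v ρ))
      (sqrtA₁ (k r) (v r) * k' + k r ^ 2 * sin (2 * v r) / sqrtA (k r) (v r) * v') r := by
  have hA := (((hk.fun_mul hv.sin).fun_pow 2).const_mul 2).const_add 1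
  refine (hA.sqrt (A_pos (k r) (v r)).ne').congr_deriv ?_
  have := (sqrtA_pos (k r) (v r)).ne'
  simp only [sqrtA₁, sqrtA, A, sin_two_mul] at this ⊢
  field_simp
  ring

theorem hasDerivAt_sqrtA (κ w : ℝ) : HasDerivAt (sqrtA · w) (sqrtA₁ κ w) κ := by
  simpa using hasDerivAt_sqrtA_comp (hasDerivAt_id' κ) (hasDerivAt_const κ w)

theorem hasDerivAt_sqrtA₁ (κ w : ℝ) : HasDerivAt (sqrtA₁ · w) (sqrtA₂ κ w) κ := by
  have h := (((hasDerivAt_id' κ).const_mul 2).mul_const (sin w ^ 2)).fun_div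
    (hasDerivAt_sqrtA_comp (hasDerivAt_id' κ) (hasDerivAt_const κ w)) (sqrtA_pos κ w).ne'
  refine h.congr_deriv ?_
  have := (sqrtA_pos κ w).ne'
  have hA := sq_sqrtA κ w
  simp only [sqrtA₁, sqrtA₂, ← hA]
  field_simp
  simp only [A] at hA
  linear_combination sin w ^ 2 * hA

def source (κ w : ℝ) : ℝ :=
  3 * (A κ w ^ ((3:ℝ)/2) - A κ w ^ ((1:ℝ)/2)) + A κ w ^ (-(1:ℝ)/2) - A κ w ^ (-(3:ℝ)/2)

theorem source_eq (κ w : ℝ) :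
    source κ w = 3 * (A κ w * sqrtA κ w - sqrtA κ w) + (sqrtA κ w)⁻¹ - (A κ w * sqrtA κ w)⁻¹ := by
  have hA := A_pos κ w
  have h₁ : A κ w ^ ((1:ℝ)/2) = sqrtA κ w := (sqrt_eq_rpow _).symm
  have h₃ : A κ w ^ ((3:ℝ)/2) = A κ w * sqrtA κ w := by
    rw [show (3:ℝ)/2 = 1 + 1/2 by norm_num, rpow_add hA, rpow_one, h₁]
  rw [source, h₁, h₃, show -(1:ℝ)/2 = -(1/2) by ring, show -(3:ℝ)/2 = -(3/2) by ring,
    rpow_neg hA.le, rpow_neg hA.le, h₁, h₃]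

theorem continuous_source : Continuous (uncurry source) := by
  have h (p : ℝ) : Continuous fun q : ℝ × ℝ => A q.1 q.2 ^ p :=
    continuous_A.rpow_const fun q => Or.inl (A_pos q.1 q.2).ne'
  exact (((h _).sub (h _)).const_mul 3 |>.add (h _)).sub (h _)

def ψ (κ w : ℝ) : ℝ := 2 * κ ^ 2 * (sin w * cos w * (1 + (κ * sin w) ^ 2)) / sqrtA κ w

theorem hasDerivAt_ψ (κ w : ℝ) :
    HasDerivAt (ψ κ) (2 * κ ^ 2 * sqrtA κ w - κ ^ 4 * sqrtA₂ κ w - source κ w / 2) w := by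
  have hs := hasDerivAt_sqrtA_comp (hasDerivAt_const w κ) (hasDerivAt_id' w)
  have h := (((hasDerivAt_sin w).fun_mul (hasDerivAt_cos w)).fun_mul
    ((((hasDerivAt_const w κ).fun_mul (hasDerivAt_sin w)).fun_pow 2).const_add 1)).const_mul
    (2 * κ ^ 2) |>.fun_div hs (sqrtA_pos κ w).ne'
  refine h.congr_deriv ?_
  have hsA := sq_sqrtA κ w
  have hs0 := (sqrtA_pos κ w).ne'
  have hsc := sin_sq_add_cos_sq w
  rw [source_eq, sqrtA₂, ← hsA, sin_two_mul]
  simp only [A] at hsA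
  set s := sqrtA κ w
  set S := sin w
  set C := cos w
  linear_combination (norm := (field_simp; ring))
    ((κ ^ 2 * (3 * S ^ 2 * s ^ 2 - S ^ 2 - 2 * κ ^ 2 * S ^ 4 - 2 * s ^ 2 + 2 * κ ^ 2 * S ^ 2)
      + (3 * s ^ 4 + 1) / 2) / s ^ 3) * hsA
    + (2 * κ ^ 2 * (s ^ 2 * (1 + 3 * κ ^ 2 * S ^ 2) - 2 * κ ^ 2 * S ^ 2 * (1 + κ ^ 2 * S ^ 2))
      / s ^ 3) * hsc

theorem ψ_nat_mul_pi (κ : ℝ) (N : ℕ) : ψ κ (N * π) = 0 := by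
  simp [ψ, sin_nat_mul_pi]

theorem integral_source (κ x : ℝ) (N : ℕ) :
    (∫ w in N * π..x, source κ w) / 2
      = 2 * κ ^ 2 * (∫ w in N * π..x, sqrtA κ w) - κ ^ 4 * (∫ w in N * π..x, sqrtA₂ κ w)
        - ψ κ x := by
  have hint {f : ℝ → ℝ → ℝ} (hf : Continuous (uncurry f)) :
      IntervalIntegrable (f κ) volume (N * π) x :=
    (hf.uncurry_left κ).intervalIntegrable _ _
  have i₁ := (hint continuous_sqrtA).const_mul (2 * κ ^ 2)
  have i₂ := (hint continuous_sqrtA₂).const_mul (κ ^ 4)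
  have i₃ := (hint continuous_source).div_const 2
  have h := intervalIntegral.integral_eq_sub_of_hasDerivAt (fun w _ => hasDerivAt_ψ κ w)
    ((i₁.sub i₂).sub i₃)
  rw [ψ_nat_mul_pi, sub_zero, intervalIntegral.integral_sub (i₁.sub i₂) i₃,
    intervalIntegral.integral_sub i₁ i₂, intervalIntegral.integral_const_mul,
    intervalIntegral.integral_const_mul, intervalIntegral.integral_div] at h
  linarith

def Phi (a : ℝ) (u : ℝ → ℝ → ℝ) (t ρ : ℝ) : ℝ := ∫ w in a..u t ρ, sqrtA ρ⁻¹ w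

variable {a : ℝ} {u : ℝ → ℝ → ℝ} {t r : ℝ}

theorem hasDerivAt_Phi_left (hu : DifferentiableAt ℝ (uncurry u) (t, r)) :
    HasDerivAt (Phi a u · r) (sqrtA r⁻¹ (u t r) * pdt u t r) t := by
  have h := ((continuous_sqrtA.uncurry_left r⁻¹).integral_hasStrictDerivAt a (u t r)).hasDerivAt
  exact h.comp t (hasDerivAt_pdt hu)

theorem hasDerivAt_Phi_right (hu : DifferentiableAt ℝ (uncurry u) (t, r)) (hr : r ≠ 0) :
    HasDerivAt (Phi a u t)
      (-(r ^ 2)⁻¹ * (∫ w in a..u t r, sqrtA₁ r⁻¹ w) + sqrtA r⁻¹ (u t r) * pdr u t r) r := by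
  refine ((hasDerivAt_inv hr).intervalIntegral_param continuous_sqrtA continuous_sqrtA₁
    hasDerivAt_sqrtA a (hasDerivAt_pdr hu)).congr_deriv ?_
  ring

theorem pdr_Phi (hu : DifferentiableAt ℝ (uncurry u) (t, r)) (hr : r ≠ 0) :
    pdr (Phi a u) t r
      = -(r ^ 2)⁻¹ * (∫ w in a..u t r, sqrtA₁ r⁻¹ w) + sqrtA r⁻¹ (u t r) * pdr u t r :=
  (hasDerivAt_Phi_right hu hr).deriv

theorem pdt_pdt_Phi (hu : ContDiffAt ℝ 2 (uncurry u) (t, r)) :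
    pdt (pdt (Phi a u)) t r
      = r⁻¹ ^ 2 * sin (2 * u t r) / sqrtA r⁻¹ (u t r) * pdt u t r ^ 2
        + sqrtA r⁻¹ (u t r) * pdt (pdt u) t r := by
  have hev : (pdt (Phi a u) · r) =ᶠ[𝓝 t] fun s => sqrtA r⁻¹ (u s r) * pdt u s r :=
    (((continuous_id'.prodMk continuous_const).tendsto t).eventually
      (hu.eventually_differentiableAt two_ne_zero)).mono
      fun s hs => (hasDerivAt_Phi_left (a := a) hs).deriv
  have h := (hasDerivAt_sqrtA_comp (hasDerivAt_const t r⁻¹)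
    (hasDerivAt_pdt (hu.differentiableAt two_ne_zero))).fun_mul (hasDerivAt_pdt_pdt hu)
  rw [pdt, hev.deriv_eq, h.deriv]
  ring

theorem pdr_pdr_Phi (hu : ContDiffAt ℝ 2 (uncurry u) (t, r)) (hr : r ≠ 0) :
    pdr (pdr (Phi a u)) t r
      = 2 * r⁻¹ ^ 3 * (∫ w in a..u t r, sqrtA₁ r⁻¹ w) + r⁻¹ ^ 4 * (∫ w in a..u t r, sqrtA₂ r⁻¹ w)
        - 2 * r⁻¹ ^ 2 * sqrtA₁ r⁻¹ (u t r) * pdr u t r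
        + r⁻¹ ^ 2 * sin (2 * u t r) / sqrtA r⁻¹ (u t r) * pdr u t r ^ 2
        + sqrtA r⁻¹ (u t r) * pdr (pdr u) t r := by
  have hev : pdr (Phi a u) t =ᶠ[𝓝 r] fun ρ =>
      -(ρ ^ 2)⁻¹ * (∫ w in a..u t ρ, sqrtA₁ ρ⁻¹ w) + sqrtA ρ⁻¹ (u t ρ) * pdr u t ρ :=
    ((((continuous_const.prodMk continuous_id').tendsto r).eventually
      (hu.eventually_differentiableAt two_ne_zero)).and (eventually_ne_nhds hr)).mono
      fun ρ hρ => pdr_Phi hρ.1 hρ.2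
  have hur := hasDerivAt_pdr (hu.differentiableAt two_ne_zero)
  have h := (((hasDerivAt_pow 2 r).fun_inv (pow_ne_zero 2 hr)).fun_neg.fun_mul
      ((hasDerivAt_inv hr).intervalIntegral_param continuous_sqrtA₁ continuous_sqrtA₂
        hasDerivAt_sqrtA₁ a hur)).fun_add
    ((hasDerivAt_sqrtA_comp (hasDerivAt_inv hr) hur).fun_mul (hasDerivAt_pdr_pdr hu))
  rw [pdr, hev.deriv_eq, h.deriv]
  field_simp
  ring

end

end Skyrme

open Skyrme

/-- Wave equation for the first auxiliary function
`Φ₁(t,r) = ∫_{N₁π}^{u(t,r)} A(r,w)^{1/2} dw`. -/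
theorem wave_equation_Phi1
    (T : ℝ) (N₁ : ℕ) (u : ℝ → ℝ → ℝ)
    (hu : ContDiffOn ℝ 2 (Function.uncurry u) (Set.Ioo 0 T ×ˢ Set.Ioi (0:ℝ)))
    (hPDE : ∀ t ∈ Set.Ioo (0:ℝ) T, ∀ r ∈ Set.Ioi (0:ℝ),
      (1 + 2 * Real.sin (u t r) ^ 2 / r ^ 2) * (pdt (pdt u) t r - pdr (pdr u) t r)
        - (2 / r) * pdr u t r
        + (Real.sin (2 * u t r) / r ^ 2) *
            (1 + (pdt u t r) ^ 2 - (pdr u t r) ^ 2 + Real.sin (u t r) ^ 2 / r ^ 2) = 0)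
    (Φ₁ : ℝ → ℝ → ℝ)
    (hΦ₁ : ∀ t r, Φ₁ t r = ∫ w in ((N₁ : ℝ) * Real.pi)..(u t r), (Afun r w) ^ ((1:ℝ)/2)) :
    ∀ t ∈ Set.Ioo (0:ℝ) T, ∀ r ∈ Set.Ioi (0:ℝ),
      pdt (pdt Φ₁) t r - pdr (pdr Φ₁) t r - (2 / r) * pdr Φ₁ t r
        = -(2 / r ^ 2) * Φ₁ t r
          + (1 / 2) * ∫ w in ((N₁ : ℝ) * Real.pi)..(u t r),
              (3 * ((Afun r w) ^ ((3:ℝ)/2) - (Afun r w) ^ ((1:ℝ)/2))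
                + (Afun r w) ^ (-(1:ℝ)/2) - (Afun r w) ^ (-(3:ℝ)/2)) := by
  intro t ht r hr
  have hr₀ : r ≠ 0 := hr.ne'
  have hu₂ : ContDiffAt ℝ 2 (Function.uncurry u) (t, r) :=
    hu.contDiffAt (prod_mem_nhds (Ioo_mem_nhds ht.1 ht.2) (Ioi_mem_nhds hr))
  obtain rfl : Φ₁ = Phi (N₁ * π) u := funext₂ fun t r => by
    simp_rw [hΦ₁, Afun_eq_A, ← sqrt_eq_rpow]; rfl
  simp_rw [Afun_eq_A]
  change _ = _ + 1 / 2 * ∫ w in N₁ * π..u t r, source r⁻¹ w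
  rw [pdt_pdt_Phi hu₂, pdr_pdr_Phi hu₂ hr₀, pdr_Phi (hu₂.differentiableAt two_ne_zero) hr₀, Phi]
  have hI := integral_source r⁻¹ (u t r) N₁
  have hs := sq_sqrtA r⁻¹ (u t r)
  have hs₀ := (sqrtA_pos r⁻¹ (u t r)).ne'
  have hPDE' := hPDE t ht r hr
  generalize (∫ w in N₁ * π..u t r, source r⁻¹ w) = I at hI ⊢
  generalize (∫ w in N₁ * π..u t r, sqrtA r⁻¹ w) = F at hI ⊢
  generalize (∫ w in N₁ * π..u t r, sqrtA₁ r⁻¹ w) = F₁ at hI ⊢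
  generalize (∫ w in N₁ * π..u t r, sqrtA₂ r⁻¹ w) = F₂ at hI ⊢
  simp only [sqrtA₁, ψ, A, sin_two_mul] at hI hs hPDE' ⊢
  generalize sqrtA r⁻¹ (u t r) = s at hI hs hs₀ ⊢
  linear_combination (norm := (field_simp; ring)) -hI + (1 / s) * hPDE'
    + ((pdt (pdt u) t r - pdr (pdr u) t r - 2 / r * pdr u t r) / s) * hs
end

section
/- Decay upgrade for v from decay of Φ: for every constant C > 0 there exist r₁ ∈ (0,1/2] and C' > 0 such that for all r ∈ (0, r₁) and all v ≥ 0, if ∫₀^v (1 + 2 sin²(ry)/r²)^{1/2} dy ≤ C r^{-3/2}, then v ≤ C' r^{-3/4}. -/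
set_option maxHeartbeats 1000000


open Real Set

/-- Decay upgrade for `v` from decay of `Φ`. -/
theorem decay_upgrade_v (C : ℝ) (hC : 0 < C) :
    ∃ r₁ ∈ Set.Ioc (0:ℝ) (1/2), ∃ C' : ℝ, 0 < C' ∧
      ∀ r ∈ Set.Ioo (0:ℝ) r₁, ∀ v : ℝ, 0 ≤ v →
        (∫ y in (0:ℝ)..v, (1 + 2 * Real.sin (r * y) ^ 2 / r ^ 2) ^ ((1:ℝ)/2))
            ≤ C * r ^ (-(3:ℝ)/2) →
        v ≤ C' * r ^ (-(3:ℝ)/4) := by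
  set K : ℝ := Real.sqrt (π * C) with hK
  have hπ : (0:ℝ) < π := Real.pi_pos
  have hKpos : 0 < K := Real.sqrt_pos.mpr (by positivity)
  refine ⟨min (1/2) ((π / (2 * K)) ^ 4), ⟨lt_min (by norm_num) (by positivity),
    min_le_left _ _⟩, K, hKpos, ?_⟩
  rintro r ⟨hr0, hr1⟩ v hv hint
  have hr14 : r ^ ((1:ℝ)/4) < π / (2 * K) := by
    have h4 : r < (π / (2 * K)) ^ 4 := lt_of_lt_of_le hr1 (min_le_right _ _)
    have h5 := Real.rpow_lt_rpow (le_of_lt hr0) h4 (by norm_num : (0:ℝ) < 1/4)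
    calc r ^ ((1:ℝ)/4) < ((π / (2 * K)) ^ 4) ^ ((1:ℝ)/4) := h5
      _ = π / (2 * K) := by
        rw [← Real.rpow_natCast (π / (2 * K)) 4, ← Real.rpow_mul (by positivity)]
        norm_num
  set w : ℝ := min v (π / (2 * r)) with hw
  have hw0 : 0 ≤ w := le_min hv (by positivity)
  have hwv : w ≤ v := min_le_left _ _
  have hrw : r * w ≤ π / 2 := by
    have h6 : w ≤ π / (2 * r) := min_le_right _ _
    calc r * w ≤ r * (π / (2 * r)) := by nlinarith
      _ = π / 2 := by field_simp
  -- continuity of the integrand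
  have hcont : Continuous fun y : ℝ => (1 + 2 * Real.sin (r * y) ^ 2 / r ^ 2) ^ ((1:ℝ)/2) := by
    apply Continuous.rpow_const
    · continuity
    · intro x; right; norm_num
  have hintg : ∀ a b : ℝ, IntervalIntegrable
      (fun y : ℝ => (1 + 2 * Real.sin (r * y) ^ 2 / r ^ 2) ^ ((1:ℝ)/2))
      MeasureTheory.volume a b :=
    fun a b => hcont.intervalIntegrable a b
  -- pointwise bound on [0, w]
  have hpt : ∀ y ∈ Set.Icc (0:ℝ) w,
      (2 / π) * y ≤ (1 + 2 * Real.sin (r * y) ^ 2 / r ^ 2) ^ ((1:ℝ)/2) := by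
    rintro y ⟨hy0, hyw⟩
    have hry0 : 0 ≤ r * y := by positivity
    have hry : r * y ≤ π / 2 := le_trans (by nlinarith) hrw
    have hsin : 2 / π * (r * y) ≤ Real.sin (r * y) := Real.mul_le_sin hry0 hry
    have hsq : Real.sin (r * y) / r ≤ (1 + 2 * Real.sin (r * y) ^ 2 / r ^ 2) ^ ((1:ℝ)/2) := by
      rw [← Real.sqrt_eq_rpow]
      apply Real.le_sqrt_of_sq_le
      rw [div_pow]
      have hnn : (0:ℝ) ≤ Real.sin (r * y) ^ 2 / r ^ 2 := by positivity
      have heq : 2 * Real.sin (r * y) ^ 2 / r ^ 2 = 2 * (Real.sin (r * y) ^ 2 / r ^ 2) := by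
        ring
      rw [heq]
      linarith
    have h7 : (2 / π) * y ≤ Real.sin (r * y) / r := by
      rw [le_div_iff₀ hr0]
      calc 2 / π * y * r = 2 / π * (r * y) := by ring
        _ ≤ Real.sin (r * y) := hsin
    linarith
  -- integral comparison
  have hlin : IntervalIntegrable (fun y : ℝ => (2 / π) * y) MeasureTheory.volume 0 w :=
    (continuous_const.mul continuous_id).intervalIntegrable 0 w
  have hI1 : (∫ y in (0:ℝ)..w, (2 / π) * y)
      ≤ ∫ y in (0:ℝ)..w, (1 + 2 * Real.sin (r * y) ^ 2 / r ^ 2) ^ ((1:ℝ)/2) :=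
    intervalIntegral.integral_mono_on hw0 hlin (hintg 0 w) hpt
  have hval : (∫ y in (0:ℝ)..w, (2 / π) * y) = w ^ 2 / π := by
    rw [intervalIntegral.integral_const_mul, integral_id]
    ring
  have hI2 : (∫ y in (0:ℝ)..w, (1 + 2 * Real.sin (r * y) ^ 2 / r ^ 2) ^ ((1:ℝ)/2))
      ≤ ∫ y in (0:ℝ)..v, (1 + 2 * Real.sin (r * y) ^ 2 / r ^ 2) ^ ((1:ℝ)/2) := by
    apply intervalIntegral.integral_mono_interval (le_refl (0:ℝ)) hw0 hwv _ (hintg 0 v)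
    filter_upwards with y
    exact Real.rpow_nonneg (by positivity) _
  have hw2 : w ^ 2 ≤ π * C * r ^ (-(3:ℝ)/2) := by
    have : w ^ 2 / π ≤ C * r ^ (-(3:ℝ)/2) := by
      rw [← hval]; linarith
    calc w ^ 2 = π * (w ^ 2 / π) := by field_simp
      _ ≤ π * (C * r ^ (-(3:ℝ)/2)) := by
          exact mul_le_mul_of_nonneg_left this (le_of_lt hπ)
      _ = π * C * r ^ (-(3:ℝ)/2) := by ring
  -- hence w ≤ K * r^{-3/4}
  have hKr : (K * r ^ (-(3:ℝ)/4)) ^ 2 = π * C * r ^ (-(3:ℝ)/2) := by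
    have : (r ^ (-(3:ℝ)/4)) ^ 2 = r ^ (-(3:ℝ)/2) := by
      rw [← Real.rpow_natCast (r ^ (-(3:ℝ)/4)) 2, ← Real.rpow_mul (le_of_lt hr0)]
      norm_num
    rw [mul_pow, this, hK, Real.sq_sqrt (by positivity)]
  have hwK : w ≤ K * r ^ (-(3:ℝ)/4) := by
    nlinarith [hw2, hKr, Real.rpow_pos_of_pos hr0 (-(3:ℝ)/4), hKpos, hw0,
      mul_pos hKpos (Real.rpow_pos_of_pos hr0 (-(3:ℝ)/4))]
  -- show K * r^{-3/4} < π/(2r), hence w = v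
  have hKlt : K * r ^ (-(3:ℝ)/4) < π / (2 * r) := by
    have hr34 : r ^ (-(3:ℝ)/4) * r = r ^ ((1:ℝ)/4) := by
      have h := (Real.rpow_add hr0 (-(3:ℝ)/4) 1).symm
      rw [Real.rpow_one] at h
      rw [h]; norm_num
    rw [lt_div_iff₀ (by positivity : (0:ℝ) < 2 * r)]
    have heq : K * r ^ (-(3:ℝ)/4) * (2 * r) = 2 * (K * (r ^ (-(3:ℝ)/4) * r)) := by ring
    rw [heq, hr34]
    have h8 : K * r ^ ((1:ℝ)/4) < K * (π / (2 * K)) := mul_lt_mul_of_pos_left hr14 hKpos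
    have h9 : K * (π / (2 * K)) = π / 2 := by field_simp
    nlinarith [h8, h9]
  rcases le_or_gt v (π / (2 * r)) with h | h
  · have : w = v := min_eq_left h
    rw [← this]; exact hwK
  · exfalso
    have : w = π / (2 * r) := min_eq_right (le_of_lt h)
    rw [this] at hwK
    linarith
end
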